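/- arXiv:1607.07165 — 5 statements merged into one kernel-verified Lean document; each statement's English description precedes it below -/
import Mathlib

section
/- Let L be an N×N tridiagonal real matrix. Then L is totally nonnegative if and only if (i) every contiguous principal minor det L[{n,n+1,...,m},{n,n+1,...,m}] (for 1 ≤ n ≤ m ≤ N) is nonnegative, and (ii) every off-diagonal entry of L is nonnegative. -/
/-!
If the row indices `r` and column indices `c` of a minor of a tridiagonal matrix are increasing
and leave a gap somewhere, i.e. `r (m - 1) + 1 < c m` or `c (m - 1) + 1 < r m`, then one
off-diagonal block of the minor lies at distance at least two from the diagonal and vanishes, so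
the minor is the product of two smaller minors. A minor without any gap is either a contiguous
principal minor or a single off-diagonal entry, and strong induction on the size finishes.
-/

/-- A real matrix is totally nonnegative if all its minors are nonnegative. -/
def TNN {N : ℕ} (A : Matrix (Fin N) (Fin N) ℝ) : Prop :=
  ∀ (k : ℕ) (r c : Fin k → Fin N), StrictMono r → StrictMono c →
    0 ≤ (A.submatrix r c).det

/-- A matrix is tridiagonal if entries vanish off the three central diagonals. -/
def Tridiagonal {N : ℕ} (A : Matrix (Fin N) (Fin N) ℝ) : Prop :=
  ∀ i j : Fin N, ((i : ℕ) + 1 < j ∨ (j : ℕ) + 1 < i) → A i j = 0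

namespace Matrix

variable {R : Type*} [CommRing R] {m p : ℕ}

theorem det_eq_mul_of_castAdd_natAdd_eq_zero (M : Matrix (Fin (m + p)) (Fin (m + p)) R)
    (h : ∀ i j, M (Fin.castAdd p i) (Fin.natAdd m j) = 0) :
    M.det = (M.submatrix (Fin.castAdd p) (Fin.castAdd p)).det *
      (M.submatrix (Fin.natAdd m) (Fin.natAdd m)).det := by
  rw [← det_submatrix_equiv_self finSumFinEquiv M]
  have hblocks : M.submatrix finSumFinEquiv finSumFinEquiv =
      fromBlocks (M.submatrix (Fin.castAdd p) (Fin.castAdd p)) 0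
        (M.submatrix (Fin.natAdd m) (Fin.castAdd p))
        (M.submatrix (Fin.natAdd m) (Fin.natAdd m)) := by
    ext (i | i) (j | j) <;> simp [h]
  rw [hblocks, det_fromBlocks_zero₁₂]

theorem det_eq_mul_of_natAdd_castAdd_eq_zero (M : Matrix (Fin (m + p)) (Fin (m + p)) R)
    (h : ∀ i j, M (Fin.natAdd m i) (Fin.castAdd p j) = 0) :
    M.det = (M.submatrix (Fin.castAdd p) (Fin.castAdd p)).det *
      (M.submatrix (Fin.natAdd m) (Fin.natAdd m)).det := by
  rw [← det_transpose, det_eq_mul_of_castAdd_natAdd_eq_zero Mᵀ fun i j => h j i,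
    ← transpose_submatrix, ← transpose_submatrix, det_transpose, det_transpose]

end Matrix

theorem StrictMono.exists_gap_or_contiguous_or_offDiag {n N : ℕ} {r c : Fin n → Fin N}
    (hr : StrictMono r) (hc : StrictMono c) :
    (∃ (m : ℕ) (_ : 0 < m) (hmn : m < n),
      (r ⟨m - 1, by omega⟩ : ℕ) + 1 < c ⟨m, hmn⟩ ∨
        (c ⟨m - 1, by omega⟩ : ℕ) + 1 < r ⟨m, hmn⟩) ∨
    (∃ a, a + n ≤ N ∧ ∀ i : Fin n, (r i : ℕ) = a + i ∧ (c i : ℕ) = a + i) ∨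
    (n = 1 ∧ ∀ i, r i ≠ c i) := by
  refine or_iff_not_imp_left.2 fun hgap => ?_
  push Not at hgap
  have step : ∀ i (hi : i + 1 < n), (r ⟨i, by omega⟩ : ℕ) < r ⟨i + 1, hi⟩ ∧
      (c ⟨i, by omega⟩ : ℕ) < c ⟨i + 1, hi⟩ ∧
      (c ⟨i + 1, hi⟩ : ℕ) ≤ r ⟨i, by omega⟩ + 1 ∧
      (r ⟨i + 1, hi⟩ : ℕ) ≤ c ⟨i, by omega⟩ + 1 :=
    fun i hi => ⟨hr (Fin.mk_lt_mk.2 i.lt_succ_self), hc (Fin.mk_lt_mk.2 i.lt_succ_self),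
      hgap (i + 1) i.succ_pos hi⟩
  rcases n with _ | n
  · exact Or.inl ⟨0, by omega, fun i => i.elim0⟩
  by_cases h0 : r 0 = c 0
  · left
    have hcont : ∀ i (hi : i < n + 1),
        (r ⟨i, hi⟩ : ℕ) = r 0 + i ∧ (c ⟨i, hi⟩ : ℕ) = r 0 + i := by
      intro i
      induction i with
      | zero => exact fun _ => ⟨rfl, by rw [h0]; rfl⟩
      | succ i ih =>
        intro hi
        have := step i hi
        have := ih (by omega)
        omega
    refine ⟨r 0, ?_, fun i => hcont i i.isLt⟩
    have := (hcont n n.lt_succ_self).1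
    have := (r ⟨n, n.lt_succ_self⟩).isLt
    omega
  · -- a second index would give `c 0 < c 1 ≤ r 0 + 1 ≤ r 1 ≤ c 0 + 1`
    obtain rfl : n = 0 := by
      by_contra hn
      have := step 0 (by omega)
      exact h0 (Fin.ext (by simp only [Fin.zero_eta] at this ⊢; omega))
    exact Or.inr ⟨rfl, fun i => by rwa [show i = 0 by omega]⟩

namespace Tridiagonal

variable {N : ℕ} {L : Matrix (Fin N) (Fin N) ℝ}

theorem det_submatrix_eq_mul_of_gap (hL : Tridiagonal L) {m p : ℕ} {r c : Fin (m + p) → Fin N}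
    (hr : Monotone r) (hc : Monotone c) (hp : 0 < p)
    (hgap : (r ⟨m - 1, by omega⟩ : ℕ) + 1 < c ⟨m, by omega⟩ ∨
      (c ⟨m - 1, by omega⟩ : ℕ) + 1 < r ⟨m, by omega⟩) :
    (L.submatrix r c).det = (L.submatrix (r ∘ Fin.castAdd p) (c ∘ Fin.castAdd p)).det *
      (L.submatrix (r ∘ Fin.natAdd m) (c ∘ Fin.natAdd m)).det := by
  have le_before : ∀ f : Fin (m + p) → Fin N, Monotone f →
      ∀ i, (f (Fin.castAdd p i) : ℕ) ≤ f ⟨m - 1, by omega⟩ :=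
    fun f hf i => hf (Fin.le_def.2 (by simp only [Fin.val_castAdd]; omega))
  have le_after : ∀ f : Fin (m + p) → Fin N, Monotone f →
      ∀ j, (f ⟨m, by omega⟩ : ℕ) ≤ f (Fin.natAdd m j) :=
    fun f hf j => hf (Fin.le_def.2 (by simp only [Fin.val_natAdd]; omega))
  rcases hgap with hgap | hgap
  · refine Matrix.det_eq_mul_of_castAdd_natAdd_eq_zero _ fun i j => hL _ _ (Or.inl ?_)
    have := le_before r hr i
    have := le_after c hc j
    omega
  · refine Matrix.det_eq_mul_of_natAdd_castAdd_eq_zero _ fun i j => hL _ _ (Or.inr ?_)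
    have := le_before c hc j
    have := le_after r hr i
    omega

theorem tnn_of_principal_minors_nonneg (hL : Tridiagonal L)
    (hP : ∀ (a k : ℕ) (hak : a + k ≤ N),
      0 ≤ (L.submatrix (fun i : Fin k => ⟨a + i, (Nat.add_lt_add_left i.isLt a).trans_le hak⟩)
        (fun i : Fin k => ⟨a + i, (Nat.add_lt_add_left i.isLt a).trans_le hak⟩)).det)
    (hOff : ∀ i j : Fin N, i ≠ j → 0 ≤ L i j) : TNN L := by
  intro n
  induction n using Nat.strong_induction_on with
  | _ n ih =>
  intro r c hr hc
  rcases hr.exists_gap_or_contiguous_or_offDiag hc with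
    ⟨m, hm₀, hmn, hgap⟩ | ⟨a, han, hrc⟩ | ⟨rfl, hne⟩
  · obtain ⟨p, rfl⟩ : ∃ p, n = m + p := ⟨n - m, by omega⟩
    rw [hL.det_submatrix_eq_mul_of_gap hr.monotone hc.monotone (by omega) hgap]
    exact mul_nonneg
      (ih m (by omega) _ _ (hr.comp (Fin.strictMono_castAdd p))
        (hc.comp (Fin.strictMono_castAdd p)))
      (ih p (by omega) _ _ (hr.comp (Fin.strictMono_natAdd m))
        (hc.comp (Fin.strictMono_natAdd m)))
  · have hr' : r = fun i => ⟨a + i, (Nat.add_lt_add_left i.isLt a).trans_le han⟩ :=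
      funext fun i => Fin.ext (hrc i).1
    have hc' : c = fun i => ⟨a + i, (Nat.add_lt_add_left i.isLt a).trans_le han⟩ :=
      funext fun i => Fin.ext (hrc i).2
    rw [hr', hc']
    exact hP a n han
  · rw [Matrix.det_unique]
    exact hOff _ _ (hne _)

end Tridiagonal

theorem stmt0 {N : ℕ} (L : Matrix (Fin N) (Fin N) ℝ) (hTri : Tridiagonal L) :
    TNN L ↔
      ((∀ (a k : ℕ) (hak : a + k ≤ N),
          0 ≤ (L.submatrix
                (fun i : Fin k => ⟨a + i, by have := i.isLt; omega⟩)
                (fun i : Fin k => ⟨a + i, by have := i.isLt; omega⟩)).det) ∧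
        ∀ i j : Fin N, i ≠ j → 0 ≤ L i j) := by
  refine ⟨fun hL => ⟨fun a k _ => ?_, fun i j _ => ?_⟩,
    fun ⟨hP, hOff⟩ => hTri.tnn_of_principal_minors_nonneg hP hOff⟩
  · exact hL k _ _ (fun _ _ h => Nat.add_lt_add_left h a) (fun _ _ h => Nat.add_lt_add_left h a)
  · simpa [Matrix.det_unique] using
      hL 1 (fun _ => i) (fun _ => j) (Subsingleton.strictMono _) (Subsingleton.strictMono _)
end

section
/- Let L be an N×N real tridiagonal matrix with all off-diagonal entries positive (N ≥ 2). Let λ₁ < ... < λ_N be the eigenvalues of L and μ₁ < ... < μ_{N-1} the eigenvalues of the trailing principal submatrix Q = L[{2,...,N},{2,...,N}]. If the strict interlacing 0 < λ₁ < μ₁ < λ₂ < μ₂ < ... < μ_{N-1} < λ_N holds, then L is totally nonnegative. -/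
/-!
Positive off-diagonal products let a positive diagonal similarity `D L D⁻¹` symmetrize `L`.
The symmetric matrix has the characteristic polynomial of `L`, so its eigenvalues are the
`λᵢ ≥ λ₁ > 0` and it is positive semidefinite; its principal minors, which equal those of `L`,
are therefore nonnegative. For a tridiagonal matrix with nonnegative off-diagonal entries this
forces every minor to be nonnegative: if the row and column indices of a minor differ at a
position `s`, say `r s < c s`, then all entries in rows up to `s` and columns from `s` on, except
the one at `(s, s)`, lie above the superdiagonal, so cutting just before or just after `s` makes
the minor block triangular with two smaller minors as diagonal blocks. Minors whose row and
column indices agree are principal.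
-/

open Matrix Polynomial

section DiagonalConj

variable {ι K : Type*} [Fintype ι] [DecidableEq ι] [Field K]

lemma Matrix.diagonal_inv_mul_diagonal {d : ι → K} (hd : ∀ i, d i ≠ 0) :
    diagonal d⁻¹ * diagonal d = 1 := by
  rw [diagonal_mul_diagonal, ← diagonal_one]
  exact congrArg diagonal (funext fun i => inv_mul_cancel₀ (hd i))

lemma Matrix.det_diagonal_mul_mul_diagonal_inv {d : ι → K} (hd : ∀ i, d i ≠ 0)
    (A : Matrix ι ι K) : (diagonal d * A * diagonal d⁻¹).det = A.det := by
  rw [det_mul_comm, ← mul_assoc, diagonal_inv_mul_diagonal hd, one_mul]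

lemma Matrix.charpoly_diagonal_mul_mul_diagonal_inv {d : ι → K} (hd : ∀ i, d i ≠ 0)
    (A : Matrix ι ι K) : (diagonal d * A * diagonal d⁻¹).charpoly = A.charpoly := by
  rw [charpoly_mul_comm, ← mul_assoc, diagonal_inv_mul_diagonal hd, one_mul]

lemma Matrix.det_submatrix_diagonal_mul_mul_diagonal_inv {κ : Type*} [Fintype κ]
    [DecidableEq κ] {d : ι → K} (hd : ∀ i, d i ≠ 0) (A : Matrix ι ι K) (r : κ → ι) :
    ((diagonal d * A * diagonal d⁻¹).submatrix r r).det = (A.submatrix r r).det := by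
  have hconj : (diagonal d * A * diagonal d⁻¹).submatrix r r
      = diagonal (d ∘ r) * A.submatrix r r * diagonal (d ∘ r)⁻¹ := by
    ext i j
    simp [diagonal_mul, mul_diagonal]
  rw [hconj, det_diagonal_mul_mul_diagonal_inv (d := d ∘ r) fun i => hd (r i)]

end DiagonalConj

lemma Fin.exists_castSucc_eq_and_succ_eq {m : ℕ} {i j : Fin (m + 1)} (h : (i : ℕ) + 1 = j) :
    ∃ t : Fin m, t.castSucc = i ∧ t.succ = j :=
  ⟨⟨i, by omega⟩, rfl, Fin.ext (by simp [← h])⟩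

lemma exists_cut_at {α : Type*} [LinearOrder α] [Nontrivial α] (s : α) :
    ∃ p : α → Prop, (∃ a, p a) ∧ (∃ b, ¬p b) ∧ ∀ a b, p a → ¬p b → a < b ∧ a ≤ s ∧ s ≤ b := by
  obtain ⟨x, hx⟩ := exists_ne s
  rcases hx.lt_or_gt with hxs | hsx
  · exact ⟨(· < s), ⟨x, hxs⟩, ⟨s, lt_irrefl s⟩, fun a b ha hb => ⟨ha.trans_le (not_lt.1 hb),
      ha.le, not_lt.1 hb⟩⟩
  · exact ⟨(· ≤ s), ⟨s, le_rfl⟩, ⟨x, not_le.2 hsx⟩, fun a b ha hb => ⟨ha.trans_lt (not_le.1 hb),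
      ha, (not_le.1 hb).le⟩⟩

section Tridiagonal

variable {N : ℕ} {A : Matrix (Fin N) (Fin N) ℝ}

lemma Tridiagonal.transpose (hA : Tridiagonal A) : Tridiagonal Aᵀ :=
  fun i j h => hA j i h.symm

lemma Tridiagonal.apply_nonneg_of_ne {m : ℕ} {A : Matrix (Fin (m + 1)) (Fin (m + 1)) ℝ}
    (hA : Tridiagonal A) (hadj : ∀ t : Fin m, 0 ≤ A t.castSucc t.succ ∧ 0 ≤ A t.succ t.castSucc)
    {i j : Fin (m + 1)} (hij : i ≠ j) : 0 ≤ A i j := by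
  have hij' : (i : ℕ) ≠ j := Fin.val_ne_of_ne hij
  rcases (by omega : (i : ℕ) + 1 = j ∨ (j : ℕ) + 1 = i ∨ (i + 1 < (j : ℕ) ∨ j + 1 < (i : ℕ)))
    with h | h | h
  · obtain ⟨t, rfl, rfl⟩ := Fin.exists_castSucc_eq_and_succ_eq h
    exact (hadj t).1
  · obtain ⟨t, rfl, rfl⟩ := Fin.exists_castSucc_eq_and_succ_eq h
    exact (hadj t).2
  · exact (hA i j h).ge

lemma Tridiagonal.apply_eq_zero_of_lt {α : Type*} [LinearOrder α] (hA : Tridiagonal A)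
    {r c : α → Fin N} (hr : StrictMono r) (hc : StrictMono c) {s a b : α} (hs : r s < c s)
    (hab : a < b) (has : a ≤ s) (hsb : s ≤ b) : A (r a) (c b) = 0 := by
  refine hA _ _ (Or.inl ?_)
  have h₁ : r a ≤ r s := hr.monotone has
  have h₂ : c s ≤ c b := hc.monotone hsb
  have h₃ : r a < r s ∨ c s < c b := by
    rcases has.lt_or_eq with has' | rfl
    · exact Or.inl (hr has')
    · exact Or.inr (hc hab)
  rw [Fin.le_def] at h₁ h₂
  rw [Fin.lt_def] at hs h₃
  omega

lemma det_submatrix_self_nonneg_of_fin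
    (hprin : ∀ (k : ℕ) (r : Fin k → Fin N), StrictMono r → 0 ≤ (A.submatrix r r).det)
    {α : Type*} [Fintype α] [DecidableEq α] [LinearOrder α] {r : α → Fin N}
    (hr : StrictMono r) : 0 ≤ (A.submatrix r r).det := by
  let e := Fintype.orderIsoFinOfCardEq α rfl
  rw [← det_submatrix_equiv_self e.toEquiv]
  exact hprin _ (r ∘ e) (hr.comp e.strictMono)

lemma Tridiagonal.det_submatrix_nonneg (hA : Tridiagonal A)
    (hnonneg : ∀ i j, i ≠ j → 0 ≤ A i j)
    (hprin : ∀ (k : ℕ) (r : Fin k → Fin N), StrictMono r → 0 ≤ (A.submatrix r r).det)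
    (α : Type*) [Fintype α] [DecidableEq α] [LinearOrder α] (r c : α → Fin N)
    (hr : StrictMono r) (hc : StrictMono c) : 0 ≤ (A.submatrix r c).det := by
  refine Finite.induction_subsingleton_or_nontrivial (P := fun α => ∀ [Fintype α] [DecidableEq α]
    [LinearOrder α] (r c : α → Fin N), StrictMono r → StrictMono c →
      0 ≤ (A.submatrix r c).det) α ?_ ?_ r c hr hc
  · intro α _ _ _ _ _ r c hr hc
    rcases eq_or_ne r c with rfl | hrc
    · exact det_submatrix_self_nonneg_of_fin hprin hr
    obtain ⟨s, hs⟩ := Function.ne_iff.1 hrc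
    have : Unique α := uniqueOfSubsingleton s
    rw [det_unique, Subsingleton.elim default s]
    exact hnonneg _ _ hs
  · intro α _ _ ih _ _ _ r c hr hc
    rcases eq_or_ne r c with rfl | hrc
    · exact det_submatrix_self_nonneg_of_fin hprin hr
    obtain ⟨s, hs⟩ := Function.ne_iff.1 hrc
    classical
    obtain ⟨p, ⟨a₀, ha₀⟩, ⟨b₀, hb₀⟩, hcut⟩ := exists_cut_at s
    have hblock : (A.submatrix r c).det = (toSquareBlockProp (A.submatrix r c) p).det
        * (toSquareBlockProp (A.submatrix r c) (¬p ·)).det := by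
      rcases hs.lt_or_gt with hlt | hgt
      · refine twoBlockTriangular_det' _ p fun a ha b hb => ?_
        obtain ⟨hab, has, hsb⟩ := hcut a b ha hb
        exact hA.apply_eq_zero_of_lt hr hc hlt hab has hsb
      · refine twoBlockTriangular_det _ p fun b hb a ha => ?_
        obtain ⟨hab, has, hsb⟩ := hcut a b ha hb
        exact hA.transpose.apply_eq_zero_of_lt hc hr hgt hab has hsb
    rw [hblock]
    exact mul_nonneg
      (ih _ (Finite.card_subtype_lt hb₀) _ _ (hr.comp (Subtype.strictMono_coe _))
        (hc.comp (Subtype.strictMono_coe _)))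
      (ih _ (Finite.card_subtype_lt (not_not.2 ha₀)) _ _ (hr.comp (Subtype.strictMono_coe _))
        (hc.comp (Subtype.strictMono_coe _)))

lemma Tridiagonal.tnn_of_det_submatrix_self_nonneg (hA : Tridiagonal A)
    (hnonneg : ∀ i j, i ≠ j → 0 ≤ A i j)
    (hprin : ∀ (k : ℕ) (r : Fin k → Fin N), StrictMono r → 0 ≤ (A.submatrix r r).det) :
    TNN A :=
  fun k => hA.det_submatrix_nonneg hnonneg hprin (Fin k)

lemma Tridiagonal.exists_isHermitian_diagonal_mul_mul_diagonal_inv {m : ℕ}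
    {A : Matrix (Fin (m + 1)) (Fin (m + 1)) ℝ} (hA : Tridiagonal A)
    (hpos : ∀ t : Fin m, 0 < A t.castSucc t.succ * A t.succ t.castSucc) :
    ∃ d : Fin (m + 1) → ℝ, (∀ i, d i ≠ 0) ∧ (diagonal d * A * diagonal d⁻¹).IsHermitian := by
  have hquot : ∀ t : Fin m, 0 < A t.castSucc t.succ / A t.succ t.castSucc := fun t =>
    div_pos_iff.2 (pos_and_pos_or_neg_and_neg_of_mul_pos (hpos t))
  -- `d (t + 1) / d t = g t` is the ratio that equalizes the two off-diagonal entries at `t`.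
  set g : Fin m → ℝ := fun t => √(A t.castSucc t.succ / A t.succ t.castSucc)
  have hg : ∀ t, 0 < g t := fun t => Real.sqrt_pos.2 (hquot t)
  have hg_sq : ∀ t, g t ^ 2 * A t.succ t.castSucc = A t.castSucc t.succ := fun t => by
    rw [Real.sq_sqrt (hquot t).le]
    exact div_mul_cancel₀ _ (right_ne_zero_of_mul (hpos t).ne')
  have hd : ∀ i, 0 < Fin.partialProd g i := by
    intro i
    induction i using Fin.induction with
    | zero => simp
    | succ t ih => rw [Fin.partialProd_succ]; exact mul_pos ih (hg t)
  refine ⟨Fin.partialProd g, fun i => (hd i).ne', IsHermitian.ext fun i j => ?_⟩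
  simp only [diagonal_mul, mul_diagonal, Pi.inv_apply, star_trivial]
  wlog hij : (i : ℕ) ≤ j generalizing i j
  · exact (this j i (by omega)).symm
  rcases (by omega : (i : ℕ) = j ∨ (i : ℕ) + 1 = j ∨ (i : ℕ) + 1 < j) with h | h | h
  · rw [Fin.ext h]
  · obtain ⟨t, rfl, rfl⟩ := Fin.exists_castSucc_eq_and_succ_eq h
    have hdt := hd t.castSucc
    have hgt := hg t
    rw [Fin.partialProd_succ, ← hg_sq t]
    field_simp
  · rw [hA i j (Or.inl h), hA j i (Or.inr h)]
    simp

end Tridiagonal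

theorem stmt7_general {n : ℕ} (L : Matrix (Fin (n + 2)) (Fin (n + 2)) ℝ)
    (hTri : Tridiagonal L)
    (hoff : ∀ i : Fin (n + 1), 0 < L i.castSucc i.succ ∧ 0 < L i.succ i.castSucc)
    (lam : Fin (n + 2) → ℝ) (mu : Fin (n + 1) → ℝ)
    (hlam : L.charpoly = ∏ i, (Polynomial.X - Polynomial.C (lam i)))
    (hlmono : StrictMono lam)
    (hinter : 0 < lam 0 ∧
      ∀ i : Fin (n + 1), lam i.castSucc < mu i ∧ mu i < lam i.succ) :
    TNN L := by
  obtain ⟨d, hd, hS⟩ := hTri.exists_isHermitian_diagonal_mul_mul_diagonal_inv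
    fun t => mul_pos (hoff t).1 (hoff t).2
  have hpsd : (diagonal d * L * diagonal d⁻¹).PosSemidef := by
    refine posSemidef_iff_isHermitian_and_spectrum_nonneg.2 ⟨hS, fun x hx => ?_⟩
    rw [mem_spectrum_iff_isRoot_charpoly, charpoly_diagonal_mul_mul_diagonal_inv hd, hlam,
      isRoot_prod] at hx
    obtain ⟨j, -, hj⟩ := hx
    rw [root_X_sub_C] at hj
    exact hj ▸ (hinter.1.trans_le (hlmono.monotone (Fin.zero_le j))).le
  refine hTri.tnn_of_det_submatrix_self_nonneg
    (fun _ _ => hTri.apply_nonneg_of_ne fun t => ⟨(hoff t).1.le, (hoff t).2.le⟩) fun k r _ => ?_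
  rw [← det_submatrix_diagonal_mul_mul_diagonal_inv hd]
  exact (hpsd.submatrix r).det_nonneg

theorem stmt7 {n : ℕ} (L : Matrix (Fin (n + 2)) (Fin (n + 2)) ℝ)
    (hTri : Tridiagonal L)
    (hoff : ∀ i : Fin (n + 1), 0 < L i.castSucc i.succ ∧ 0 < L i.succ i.castSucc)
    (lam : Fin (n + 2) → ℝ) (mu : Fin (n + 1) → ℝ)
    (hlam : L.charpoly = ∏ i, (Polynomial.X - Polynomial.C (lam i)))
    (hmu : (L.submatrix Fin.succ Fin.succ).charpoly
      = ∏ i, (Polynomial.X - Polynomial.C (mu i)))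
    (hlmono : StrictMono lam) (hmumono : StrictMono mu)
    (hinter : 0 < lam 0 ∧
      ∀ i : Fin (n + 1), lam i.castSucc < mu i ∧ mu i < lam i.succ) :
    TNN L :=
  stmt7_general L hTri hoff lam mu hlam hlmono hinter
end

section
/- Let L be an N×N real tridiagonal matrix with all off-diagonal entries positive. If L is totally nonnegative with eigenvalues λ₁ < ... < λ_N and the trailing principal submatrix Q = L[{2,...,N},{2,...,N}] has eigenvalues μ₁ < ... < μ_{N-1}, and similarly the leading principal submatrix Q' = L[{1,...,N-1},{1,...,N-1}] has eigenvalues μ'₁ < ... < μ'_{N-1}, then the interlacing with Q holds if and only if the interlacing with Q' holds (both being equivalent to total nonnegativity of L). -/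
open Matrix

namespace Tridiagonal

variable {N : ℕ}

theorem submatrix_succ {A : Matrix (Fin (N + 1)) (Fin (N + 1)) ℝ} (hA : Tridiagonal A) :
    Tridiagonal (A.submatrix Fin.succ Fin.succ) :=
  fun i j h => hA _ _ (by simp only [Fin.val_succ]; omega)

theorem submatrix_castSucc {A : Matrix (Fin (N + 1)) (Fin (N + 1)) ℝ} (hA : Tridiagonal A) :
    Tridiagonal (A.submatrix Fin.castSucc Fin.castSucc) :=
  fun i j h => hA _ _ (by simpa only [Fin.val_castSucc] using h)

theorem scalar_sub {A : Matrix (Fin N) (Fin N) ℝ} (hA : Tridiagonal A) (t : ℝ) :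
    Tridiagonal (scalar (Fin N) t - A) := fun i j h => by
  have hij : i ≠ j := by rintro rfl; omega
  simp [hA i j h, hij]

theorem det_eq_three_term {n : ℕ} {A : Matrix (Fin (n + 2)) (Fin (n + 2)) ℝ}
    (hA : Tridiagonal A) :
    A.det = A 0 0 * (A.submatrix Fin.succ Fin.succ).det
      - A 0 1 * A 1 0 * (A.submatrix (Fin.succ ∘ Fin.succ) (Fin.succ ∘ Fin.succ)).det := by
  have hrow : ∀ j : Fin n, A 0 j.succ.succ = 0 := fun j => hA _ _ (by left; simp)
  have hcol : ∀ i : Fin n, A i.succ.succ 0 = 0 := fun i => hA _ _ (by right; simp)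
  have hminor : (A.submatrix Fin.succ (Fin.succAbove 1)).det
      = A 1 0 * (A.submatrix (Fin.succ ∘ Fin.succ) (Fin.succ ∘ Fin.succ)).det := by
    rw [det_succ_column_zero, Fin.sum_univ_succ]
    have h1 : Fin.succAbove (1 : Fin (n + 2)) ∘ Fin.succ = Fin.succ ∘ Fin.succ := by
      ext j; simp [Fin.succAbove_of_le_castSucc, Fin.le_def]
    simp [hcol, h1]
  rw [det_succ_row_zero, Fin.sum_univ_succ, Fin.sum_univ_succ]
  simp only [hrow, mul_zero, zero_mul, Finset.sum_const_zero, add_zero, Fin.succAbove_zero]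
  simp only [Fin.succ_zero_eq_one, Fin.val_zero, Fin.val_one, pow_zero, pow_one, hminor]
  ring

theorem det_mul_det_inner {n : ℕ} {A : Matrix (Fin (n + 2)) (Fin (n + 2)) ℝ}
    (hA : Tridiagonal A) :
    A.det * (A.submatrix (Fin.castSucc ∘ Fin.succ) (Fin.castSucc ∘ Fin.succ)).det
      = (A.submatrix Fin.succ Fin.succ).det * (A.submatrix Fin.castSucc Fin.castSucc).det
        - ∏ i : Fin (n + 1), A i.castSucc i.succ * A i.succ i.castSucc := by
  induction n with
  | zero =>
    simp only [Nat.reduceAdd, det_fin_two, submatrix_empty, det_fin_zero, mul_one, det_unique,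
      Fin.default_eq_zero, submatrix_apply, Fin.succ_zero_eq_one, Fin.castSucc_zero,
      Finset.univ_unique, Finset.prod_singleton]
    ring
  | succ n ih =>
    have hP := hA.det_eq_three_term
    have hP' := hA.submatrix_castSucc.det_eq_three_term
    have hIH := ih hA.submatrix_succ
    rw [Fin.prod_univ_succ]
    simp only [submatrix_submatrix, submatrix_apply, Function.comp_def, Fin.succ_castSucc,
      Fin.castSucc_zero, Fin.castSucc_one, Fin.succ_zero_eq_one] at hP hP' hIH ⊢
    linear_combination
      (A.submatrix (fun j : Fin (n + 1) => j.succ.castSucc) (fun j => j.succ.castSucc)).det * hP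
      - (A.submatrix Fin.succ Fin.succ).det * hP' + A 0 1 * A 1 0 * hIH

end Tridiagonal

theorem Matrix.eval_charpoly_submatrix {R m n : Type*} [CommRing R] [Fintype m] [DecidableEq m]
    [Fintype n] [DecidableEq n] (A : Matrix n n R) {e : m → n} (he : Function.Injective e)
    (t : R) : (A.submatrix e e).charpoly.eval t = ((scalar n t - A).submatrix e e).det := by
  rw [eval_charpoly]
  congr 1
  ext i j
  simp [diagonal_apply, he.eq_iff]

theorem Tridiagonal.eval_charpoly_mul_eval_charpoly {n : ℕ}
    {L : Matrix (Fin (n + 2)) (Fin (n + 2)) ℝ} (hL : Tridiagonal L) {t : ℝ}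
    (ht : L.charpoly.eval t = 0) :
    (L.submatrix Fin.succ Fin.succ).charpoly.eval t
        * (L.submatrix Fin.castSucc Fin.castSucc).charpoly.eval t
      = ∏ i : Fin (n + 1), L i.castSucc i.succ * L i.succ i.castSucc := by
  have h := (hL.scalar_sub t).det_mul_det_inner
  rw [← eval_charpoly, ht, zero_mul, ← eval_charpoly_submatrix _ (Fin.succ_injective _),
    ← eval_charpoly_submatrix _ (Fin.castSucc_injective _), eq_sub_iff_add_eq, zero_add] at h
  rw [← h]
  refine Finset.prod_congr rfl fun i _ => ?_
  simp [(Fin.castSucc_lt_succ (i := i)).ne, (Fin.castSucc_lt_succ (i := i)).ne']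

section Interlacing

variable {R : Type*} [CommRing R] [LinearOrder R] [IsStrictOrderedRing R]

theorem exists_mem_Ioo_of_prod_mul_prod_neg {ι : Type*} [Fintype ι] {a b : R} (hab : a ≤ b)
    (v : ι → R) (h : (∏ j, (a - v j)) * ∏ j, (b - v j) < 0) : ∃ j, a < v j ∧ v j < b := by
  by_contra! hv
  refine h.not_ge ?_
  rw [← Finset.prod_mul_distrib]
  refine Finset.prod_nonneg fun j _ => ?_
  rcases le_or_gt (v j) a with hja | hja
  · exact mul_nonneg (by linarith) (by linarith)
  · exact mul_nonneg_of_nonpos_of_nonpos (by linarith) (by linarith [hv j hja])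

theorem mul_neg_iff_of_mul_eq_of_mul_eq {a b a' b' c : R} (hc : 0 < c) (ha : a * a' = c)
    (hb : b * b' = c) : a * b < 0 ↔ a' * b' < 0 := by
  have hpos : 0 < (a * b) * (a' * b') := by
    rw [show (a * b) * (a' * b') = (a * a') * (b * b') by ring, ha, hb]
    exact mul_pos hc hc
  constructor <;> intro h <;> nlinarith

variable {m : ℕ} {lam : Fin (m + 2) → R} {mu : Fin (m + 1) → R}

def StrictlyInterlaces (lam : Fin (m + 2) → R) (mu : Fin (m + 1) → R) : Prop :=
  ∀ i : Fin (m + 1), lam i.castSucc < mu i ∧ mu i < lam i.succ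

theorem StrictlyInterlaces.prod_mul_prod_neg (hlam : StrictMono lam)
    (h : StrictlyInterlaces lam mu) (i : Fin (m + 1)) :
    (∏ j, (lam i.castSucc - mu j)) * ∏ j, (lam i.succ - mu j) < 0 := by
  rw [← Finset.prod_mul_distrib, Fin.prod_univ_succAbove _ i]
  have hlt := hlam (Fin.castSucc_lt_succ (i := i))
  refine mul_neg_of_neg_of_pos (mul_neg_of_neg_of_pos (by linarith [h i]) (by linarith [h i]))
    (Finset.prod_pos fun k _ => ?_)
  rcases lt_or_gt_of_ne (Fin.succAbove_ne i k) with hk | hk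
  · have : lam (i.succAbove k).succ ≤ lam i.castSucc :=
      hlam.monotone (Fin.succ_le_castSucc_iff.mpr hk)
    exact mul_pos (by linarith [h (i.succAbove k)]) (by linarith [h (i.succAbove k)])
  · have : lam i.succ ≤ lam (i.succAbove k).castSucc :=
      hlam.monotone (Fin.succ_le_castSucc_iff.mpr hk)
    exact mul_pos_of_neg_of_neg (by linarith [h (i.succAbove k)]) (by linarith [h (i.succAbove k)])

theorem StrictlyInterlaces.of_prod_mul_prod_neg (hlam : StrictMono lam) (hmu : StrictMono mu)
    (h : ∀ i : Fin (m + 1), (∏ j, (lam i.castSucc - mu j)) * ∏ j, (lam i.succ - mu j) < 0) :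
    StrictlyInterlaces lam mu := by
  choose g hg using fun i => exists_mem_Ioo_of_prod_mul_prod_neg
    (hlam.monotone (Fin.castSucc_le_succ i)) mu (h i)
  have hg_mono : StrictMono g := fun i i' hii' => hmu.lt_iff_lt.mp <| calc
    mu (g i) < lam i.succ := (hg i).2
    _ ≤ lam i'.castSucc := hlam.monotone (Fin.succ_le_castSucc_iff.mpr hii')
    _ < mu (g i') := (hg i').1
  intro i
  simpa [hg_mono.eq_id] using hg i

theorem strictlyInterlaces_iff_prod_mul_prod_neg (hlam : StrictMono lam) (hmu : StrictMono mu) :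
    StrictlyInterlaces lam mu ↔
      ∀ i : Fin (m + 1), (∏ j, (lam i.castSucc - mu j)) * ∏ j, (lam i.succ - mu j) < 0 :=
  ⟨fun h => h.prod_mul_prod_neg hlam, .of_prod_mul_prod_neg hlam hmu⟩

end Interlacing

theorem stmt8_general {n : ℕ} (L : Matrix (Fin (n + 2)) (Fin (n + 2)) ℝ)
    (hTri : Tridiagonal L)
    (hoff : ∀ i : Fin (n + 1), 0 < L i.castSucc i.succ ∧ 0 < L i.succ i.castSucc)
    (lam : Fin (n + 2) → ℝ) (mu mu' : Fin (n + 1) → ℝ)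
    (hlam : L.charpoly = ∏ i, (Polynomial.X - Polynomial.C (lam i)))
    (hmu : (L.submatrix Fin.succ Fin.succ).charpoly
      = ∏ i, (Polynomial.X - Polynomial.C (mu i)))
    (hmu' : (L.submatrix Fin.castSucc Fin.castSucc).charpoly
      = ∏ i, (Polynomial.X - Polynomial.C (mu' i)))
    (hlmono : StrictMono lam) (hmumono : StrictMono mu) (hmu'mono : StrictMono mu') :
    ((0 < lam 0 ∧ ∀ i : Fin (n + 1), lam i.castSucc < mu i ∧ mu i < lam i.succ) ↔
     (0 < lam 0 ∧ ∀ i : Fin (n + 1), lam i.castSucc < mu' i ∧ mu' i < lam i.succ)) := by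
  have hpos : 0 < ∏ i : Fin (n + 1), L i.castSucc i.succ * L i.succ i.castSucc :=
    Finset.prod_pos fun i _ => mul_pos (hoff i).1 (hoff i).2
  have hkey : ∀ k, (∏ j, (lam k - mu j)) * ∏ j, (lam k - mu' j)
      = ∏ i : Fin (n + 1), L i.castSucc i.succ * L i.succ i.castSucc := fun k => by
    have h := hTri.eval_charpoly_mul_eval_charpoly (t := lam k)
      (by simpa [hlam, Polynomial.eval_prod, Finset.prod_eq_zero_iff] using ⟨k, sub_self _⟩)
    simpa [hmu, hmu', Polynomial.eval_prod] using h
  refine and_congr_right fun _ => ?_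
  change StrictlyInterlaces lam mu ↔ StrictlyInterlaces lam mu'
  rw [strictlyInterlaces_iff_prod_mul_prod_neg hlmono hmumono,
    strictlyInterlaces_iff_prod_mul_prod_neg hlmono hmu'mono]
  exact forall_congr' fun i => mul_neg_iff_of_mul_eq_of_mul_eq hpos (hkey _) (hkey _)

theorem stmt8 {n : ℕ} (L : Matrix (Fin (n + 2)) (Fin (n + 2)) ℝ)
    (hTri : Tridiagonal L)
    (hoff : ∀ i : Fin (n + 1), 0 < L i.castSucc i.succ ∧ 0 < L i.succ i.castSucc)
    (hTNN : TNN L)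
    (lam : Fin (n + 2) → ℝ) (mu mu' : Fin (n + 1) → ℝ)
    (hlam : L.charpoly = ∏ i, (Polynomial.X - Polynomial.C (lam i)))
    (hmu : (L.submatrix Fin.succ Fin.succ).charpoly
      = ∏ i, (Polynomial.X - Polynomial.C (mu i)))
    (hmu' : (L.submatrix Fin.castSucc Fin.castSucc).charpoly
      = ∏ i, (Polynomial.X - Polynomial.C (mu' i)))
    (hlmono : StrictMono lam) (hmumono : StrictMono mu) (hmu'mono : StrictMono mu') :
    ((0 < lam 0 ∧ ∀ i : Fin (n + 1), lam i.castSucc < mu i ∧ mu i < lam i.succ) ↔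
     (0 < lam 0 ∧ ∀ i : Fin (n + 1), lam i.castSucc < mu' i ∧ mu' i < lam i.succ)) :=
  stmt8_general L hTri hoff lam mu mu' hlam hmu hmu' hlmono hmumono hmu'mono
end

section
/- Let L be an N×N real tridiagonal matrix with all off-diagonal entries positive, with distinct eigenvalues 0 < λ₁ < ... < λ_N. Let X₁(λ) = det((L − λE)[{2,...,N},{2,...,N}]) be the (1,1)-cofactor polynomial. Then L is totally nonnegative if and only if (−1)^{i−1} X₁(λ_i) > 0 for every i = 1, ..., N. -/
open Matrix Polynomial Finset

lemma Fin.eq_or_adjacent_or_far {n : ℕ} (i j : Fin (n + 1)) :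
    i = j ∨ (∃ t : Fin n, i = t.castSucc ∧ j = t.succ) ∨
      (∃ t : Fin n, i = t.succ ∧ j = t.castSucc) ∨ ((i : ℕ) + 1 < j ∨ (j : ℕ) + 1 < i) := by
  rcases lt_trichotomy (i : ℕ) j with h | h | h
  · by_cases hj : (j : ℕ) = i + 1
    · exact Or.inr <| Or.inl ⟨⟨i, by omega⟩, rfl, Fin.ext (by simp [hj])⟩
    · exact Or.inr <| Or.inr <| Or.inr <| Or.inl (by omega)
  · exact Or.inl (Fin.ext h)
  · by_cases hi : (i : ℕ) = j + 1
    · exact Or.inr <| Or.inr <| Or.inl ⟨⟨j, by omega⟩, Fin.ext (by simp [hi]), rfl⟩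
    · exact Or.inr <| Or.inr <| Or.inr <| Or.inr (by omega)

lemma StrictMono.exists_gap_or_eq {k N : ℕ} {r c : Fin (k + 2) → Fin N}
    (hr : StrictMono r) (hc : StrictMono c) :
    (∃ s : Fin (k + 1), (c s.castSucc : ℕ) + 1 < r s.succ) ∨
      (∃ s : Fin (k + 1), (r s.castSucc : ℕ) + 1 < c s.succ) ∨ r = c := by
  refine or_iff_not_imp_left.2 fun hrow => or_iff_not_imp_left.2 fun hcol => ?_
  simp only [not_exists, not_lt] at hrow hcol
  have step (s : Fin (k + 1)) : r s.castSucc < r s.succ ∧ c s.castSucc < c s.succ :=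
    ⟨hr s.castSucc_lt_succ, hc s.castSucc_lt_succ⟩
  funext i
  refine Fin.cases ?_ (fun s => ?_) i
  · have := step 0; have := hrow 0; have := hcol 0
    exact Fin.ext (by simp only [Fin.castSucc_zero] at *; omega)
  · have := step s; have := hrow s; have := hcol s
    exact Fin.ext (by omega)

section Roots

variable {ι R : Type*} [Fintype ι] [CommRing R] [IsDomain R] {a b : ι → R}

lemma exists_eq_of_prod_X_sub_C_eq (h : ∏ l, (X - C (a l)) = ∏ l, (X - C (b l))) (i : ι) :
    ∃ j, a i = b j := by
  have h0 : ∏ l, (a i - b l) = 0 := by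
    have := congrArg (eval (a i)) h
    simp only [eval_prod, eval_sub, eval_X, eval_C] at this
    rw [← this]
    exact Finset.prod_eq_zero (mem_univ i) (sub_self _)
  obtain ⟨j, -, hj⟩ := Finset.prod_eq_zero_iff.1 h0
  exact ⟨j, sub_eq_zero.1 hj⟩

lemma prod_erase_sub_eq_of_prod_X_sub_C_eq [DecidableEq ι]
    (h : ∏ l, (X - C (a l)) = ∏ l, (X - C (b l))) {i j : ι} (hij : a i = b j) :
    ∏ l ∈ univ.erase i, (a l - a i) = ∏ l ∈ univ.erase j, (b l - b j) := by
  have hcancel : ∏ l ∈ univ.erase i, (X - C (a l)) = ∏ l ∈ univ.erase j, (X - C (b l)) := by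
    refine mul_left_cancel₀ (X_sub_C_ne_zero (a i)) ?_
    rw [Finset.mul_prod_erase _ (fun l => X - C (a l)) (mem_univ i), hij,
      Finset.mul_prod_erase _ (fun l => X - C (b l)) (mem_univ j), h]
  have heval := congrArg (eval (a i)) hcancel
  simp only [eval_prod, eval_sub, eval_X, eval_C] at heval
  calc ∏ l ∈ univ.erase i, (a l - a i)
      = (-1) ^ #(univ.erase i) * ∏ l ∈ univ.erase i, (a i - a l) := by
        rw [← prod_neg]; simp_rw [neg_sub]
    _ = (-1) ^ #(univ.erase j) * ∏ l ∈ univ.erase j, (b j - b l) := by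
        rw [card_erase_of_mem (mem_univ _), card_erase_of_mem (mem_univ _), heval, hij]
    _ = ∏ l ∈ univ.erase j, (b l - b j) := by
        rw [← prod_neg]; simp_rw [neg_sub]

end Roots

lemma StrictMono.neg_one_pow_mul_prod_erase_sub_pos {n : ℕ} {lam : Fin n → ℝ}
    (hmono : StrictMono lam) (i : Fin n) :
    0 < (-1 : ℝ) ^ (i : ℕ) * ∏ l ∈ univ.erase i, (lam l - lam i) := by
  have hsplit : univ.erase i = Iio i ∪ Ioi i := by
    ext l
    simp
  have hbelow : ∏ l ∈ Iio i, (lam l - lam i) = (-1) ^ (i : ℕ) * ∏ l ∈ Iio i, (lam i - lam l) := by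
    rw [← Fin.card_Iio, ← prod_neg]
    simp_rw [neg_sub]
  rw [hsplit, prod_union (disjoint_left.2 fun l hl hl' => ?_), hbelow, ← mul_assoc, ← mul_assoc,
    ← pow_add, Even.neg_one_pow ⟨_, rfl⟩, one_mul]
  · exact mul_pos (prod_pos fun l hl => sub_pos.2 (hmono (mem_Iio.1 hl)))
      (prod_pos fun l hl => sub_pos.2 (hmono (mem_Ioi.1 hl)))
  · exact (mem_Iio.1 hl).asymm (mem_Ioi.1 hl')

namespace Matrix

variable {ι : Type*} [Fintype ι] [DecidableEq ι]

section DiagonalConj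

variable {K : Type*} [Field K] {d : ι → K}

lemma diagonal_mul_diagonal_inv (hd : ∀ i, d i ≠ 0) : diagonal d * diagonal d⁻¹ = 1 := by
  rw [diagonal_mul_diagonal, ← diagonal_one]
  exact congrArg diagonal (funext fun i => mul_inv_cancel₀ (hd i))

lemma diagonal_inv_mul_diagonal_s12 (hd : ∀ i, d i ≠ 0) : diagonal d⁻¹ * diagonal d = 1 := by
  rw [diagonal_mul_diagonal, ← diagonal_one]
  exact congrArg diagonal (funext fun i => inv_mul_cancel₀ (hd i))

lemma charpoly_diagonal_conj (hd : ∀ i, d i ≠ 0) (A : Matrix ι ι K) :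
    (diagonal d * A * diagonal d⁻¹).charpoly = A.charpoly := by
  rw [Matrix.mul_assoc, charpoly_mul_comm, Matrix.mul_assoc, diagonal_inv_mul_diagonal_s12 hd,
    Matrix.mul_one]

lemma diagonal_conj_sub_smul_one (hd : ∀ i, d i ≠ 0) (A : Matrix ι ι K) (t : K) :
    diagonal d * (A - t • 1) * diagonal d⁻¹ = diagonal d * A * diagonal d⁻¹ - t • 1 := by
  rw [Matrix.mul_sub, Matrix.sub_mul, Matrix.mul_smul, Matrix.mul_one, Matrix.smul_mul,
    diagonal_mul_diagonal_inv hd]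

lemma det_submatrix_diagonal_conj (hd : ∀ i, d i ≠ 0) (A : Matrix ι ι K) {κ : Type*}
    [Fintype κ] [DecidableEq κ] (f : κ → ι) :
    ((diagonal d * A * diagonal d⁻¹).submatrix f f).det = (A.submatrix f f).det := by
  have hconj : (diagonal d * A * diagonal d⁻¹).submatrix f f =
      diagonal (d ∘ f) * A.submatrix f f * diagonal (d ∘ f)⁻¹ := by
    ext i j
    simp [mul_diagonal, diagonal_mul]
  rw [hconj, det_mul, det_mul, mul_right_comm, ← det_mul,
    diagonal_mul_diagonal_inv (d := d ∘ f) fun i => hd (f i), det_one, one_mul]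

end DiagonalConj

lemma adjugate_conj {R : Type*} [CommRing R] {P Q : Matrix ι ι R} (hPQ : P * Q = 1)
    (hQP : Q * P = 1) (D : Matrix ι ι R) : adjugate (P * D * Q) = P * adjugate D * Q := by
  have hP : adjugate P = P.det • Q := by
    rw [← Matrix.mul_one (adjugate P), ← hPQ, ← Matrix.mul_assoc, adjugate_mul, Matrix.smul_mul,
      Matrix.one_mul]
  have hQ : adjugate Q = Q.det • P := by
    rw [← Matrix.mul_one (adjugate Q), ← hQP, ← Matrix.mul_assoc, adjugate_mul, Matrix.smul_mul,
      Matrix.one_mul]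
  have hdet : Q.det * P.det = 1 := by rw [← det_mul, hQP, det_one]
  rw [adjugate_mul_distrib, adjugate_mul_distrib, hP, hQ, Matrix.smul_mul, Matrix.mul_smul,
    Matrix.mul_smul, smul_smul, hdet, one_smul, Matrix.mul_assoc]

lemma IsHermitian.adjugate_sub_eigenvalue_smul_apply {A : Matrix ι ι ℝ}
    (hA : A.IsHermitian) (k i j : ι) :
    Matrix.adjugate (A - hA.eigenvalues k • 1) i j =
      (∏ l ∈ univ.erase k, (hA.eigenvalues l - hA.eigenvalues k)) *
        (hA.eigenvectorBasis k i * hA.eigenvectorBasis k j) := by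
  set U : Matrix ι ι ℝ := ↑hA.eigenvectorUnitary
  set ev := hA.eigenvalues
  have hUU : U * star U = 1 := Unitary.coe_mul_star_self hA.eigenvectorUnitary
  have hA' : A = U * diagonal ev * star U := by
    simpa using hA.spectral_theorem
  have hspec : A - ev k • 1 = U * diagonal (fun l => ev l - ev k) * star U := by
    rw [← diagonal_sub ev fun _ => ev k, ← smul_one_eq_diagonal, Matrix.mul_sub, Matrix.sub_mul,
      Matrix.mul_smul, Matrix.mul_one, Matrix.smul_mul, hUU, ← hA']
  rw [hspec, Matrix.adjugate_conj hUU (Unitary.coe_star_mul_self hA.eigenvectorUnitary),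
    adjugate_diagonal, mul_apply, Finset.sum_eq_single k]
  · simp [U, mul_diagonal]
    ring
  · intro l _ hl
    rw [mul_diagonal, prod_eq_zero (mem_erase.2 ⟨Ne.symm hl, mem_univ k⟩) (sub_self _), mul_zero,
      zero_mul]
  · simp

lemma IsHermitian.posDef_of_charpoly_eq_prod {A : Matrix ι ι ℝ} (hA : A.IsHermitian) {lam : ι → ℝ}
    (hchar : A.charpoly = ∏ i, (X - C (lam i))) (hpos : ∀ i, 0 < lam i) : A.PosDef := by
  refine hA.posDef_iff_eigenvalues_pos.2 fun k => ?_
  obtain ⟨i, hi⟩ :=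
    exists_eq_of_prod_X_sub_C_eq (by simpa using hA.charpoly_eq.symm.trans hchar) k
  exact hi ▸ hpos i

end Matrix

namespace Tridiagonal

theorem det_submatrix_nonneg_s12 {N : ℕ} {L : Matrix (Fin N) (Fin N) ℝ} (hL : Tridiagonal L)
    (hnn : ∀ i j, 0 ≤ L i j)
    (hprin : ∀ (k : ℕ) (f : Fin k → Fin N), StrictMono f → 0 ≤ (L.submatrix f f).det)
    {ι : Type} [Fintype ι] [LinearOrder ι] {r c : ι → Fin N}
    (hr : StrictMono r) (hc : StrictMono c) : 0 ≤ (L.submatrix r c).det := by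
  induction h : Fintype.card ι using Nat.strong_induction_on generalizing ι with
  | _ m ih =>
  classical
  let e := Fintype.orderIsoFinOfCardEq ι h
  set M := L.submatrix (r ∘ e) (c ∘ e)
  rw [show (L.submatrix r c).det = M.det from (det_submatrix_equiv_self e.toEquiv _).symm]
  have hr' : StrictMono (r ∘ e) := hr.comp e.strictMono
  have hc' : StrictMono (c ∘ e) := hc.comp e.strictMono
  have hblocks (p : Fin m → Prop) [DecidablePred p] {a b : Fin m} (ha : p a) (hb : ¬p b) :
      0 ≤ (toSquareBlockProp M p).det * (toSquareBlockProp M (¬p ·)).det :=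
    mul_nonneg
      (ih _ ((Fintype.card_subtype_lt hb).trans_eq (Fintype.card_fin m))
        (hr'.comp (Subtype.strictMono_coe _)) (hc'.comp (Subtype.strictMono_coe _)) rfl)
      (ih _ ((Fintype.card_subtype_lt (p := (¬p ·)) (not_not.2 ha)).trans_eq
        (Fintype.card_fin m))
        (hr'.comp (Subtype.strictMono_coe _)) (hc'.comp (Subtype.strictMono_coe _)) rfl)
  obtain _ | _ | k := m
  · simp
  · simpa [M] using hnn _ _
  · rcases hr'.exists_gap_or_eq hc' with ⟨s, hs⟩ | ⟨s, hs⟩ | hrc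
    · rw [twoBlockTriangular_det M (· ≤ s.castSucc) fun i hi j hj => hL _ _ <| Or.inr ?_]
      · exact hblocks _ le_rfl (Fin.castSucc_lt_succ (i := s)).not_ge
      · have := hc'.monotone hj
        have := hr'.monotone (Fin.castSucc_lt_iff_succ_le.1 (not_le.1 hi))
        simp only [Function.comp_apply, Fin.le_def] at *
        omega
    · rw [twoBlockTriangular_det' M (· ≤ s.castSucc) fun i hi j hj => hL _ _ <| Or.inl ?_]
      · exact hblocks _ le_rfl (Fin.castSucc_lt_succ (i := s)).not_ge
      · have := hr'.monotone hi
        have := hc'.monotone (Fin.castSucc_lt_iff_succ_le.1 (not_le.1 hj))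
        simp only [Function.comp_apply, Fin.le_def] at *
        omega
    · simpa [M, hrc] using hprin _ _ hc'

section

variable {n : ℕ} {L : Matrix (Fin (n + 1)) (Fin (n + 1)) ℝ}

lemma apply_nonneg (hL : Tridiagonal L) (hdiag : ∀ i, 0 ≤ L i i)
    (hoff : ∀ t : Fin n, 0 ≤ L t.castSucc t.succ ∧ 0 ≤ L t.succ t.castSucc) (i j : Fin (n + 1)) :
    0 ≤ L i j := by
  rcases Fin.eq_or_adjacent_or_far i j with rfl | ⟨t, rfl, rfl⟩ | ⟨t, rfl, rfl⟩ | hfar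
  exacts [hdiag i, (hoff t).1, (hoff t).2, (hL i j hfar).ge]

theorem tnn (hL : Tridiagonal L)
    (hoff : ∀ t : Fin n, 0 ≤ L t.castSucc t.succ ∧ 0 ≤ L t.succ t.castSucc)
    (hprin : ∀ (k : ℕ) (f : Fin k → Fin (n + 1)), StrictMono f → 0 ≤ (L.submatrix f f).det) :
    TNN L := by
  have hdiag (i : Fin (n + 1)) : 0 ≤ L i i := by
    simpa using hprin 1 (fun _ => i) (Subsingleton.strictMono _)
  exact fun _ _ _ hr hc => hL.det_submatrix_nonneg_s12 (hL.apply_nonneg hdiag hoff) hprin hr hc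

lemma isSymm (hL : Tridiagonal L) (h : ∀ t : Fin n, L t.succ t.castSucc = L t.castSucc t.succ) :
    L.IsSymm := by
  ext i j
  rcases Fin.eq_or_adjacent_or_far i j with rfl | ⟨t, rfl, rfl⟩ | ⟨t, rfl, rfl⟩ | hfar
  exacts [rfl, h t, (h t).symm, (hL j i hfar.symm).trans (hL i j hfar).symm]

lemma diagonal_mul_mul_diagonal (hL : Tridiagonal L) (a b : Fin (n + 1) → ℝ) :
    Tridiagonal (diagonal a * L * diagonal b) := fun i j hfar => by
  simp [hL i j hfar]

lemma exists_isSymm_diagonal_conj (hL : Tridiagonal L)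
    (hoff : ∀ t : Fin n, 0 < L t.castSucc t.succ ∧ 0 < L t.succ t.castSucc) :
    ∃ d : Fin (n + 1) → ℝ, (∀ i, 0 < d i) ∧ (diagonal d * L * diagonal d⁻¹).IsSymm := by
  let s (t : Fin n) : ℝ := √(L t.castSucc t.succ / L t.succ t.castSucc)
  have hs (t : Fin n) : 0 < s t := Real.sqrt_pos.2 (div_pos (hoff t).1 (hoff t).2)
  let d : Fin (n + 1) → ℝ := Fin.induction 1 fun t dt => dt * s t
  have hd : ∀ i, 0 < d i := Fin.induction one_pos fun t ht => by
    simpa [d] using mul_pos ht (hs t)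
  refine ⟨d, hd, (hL.diagonal_mul_mul_diagonal _ _).isSymm fun t => ?_⟩
  have hsq : s t ^ 2 = L t.castSucc t.succ / L t.succ t.castSucc :=
    Real.sq_sqrt (div_pos (hoff t).1 (hoff t).2).le
  have hdt : d t.succ = d t.castSucc * s t := Fin.induction_succ _ _ t
  have := (hoff t).2.ne'
  have := (hd t.castSucc).ne'
  have := (hs t).ne'
  simp only [mul_diagonal, diagonal_mul, Pi.inv_apply, hdt]
  field_simp
  rw [hsq]
  field_simp

lemma apply_zero_ne_zero_of_mulVec_eq_smul (hL : Tridiagonal L)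
    (hsup : ∀ t : Fin n, L t.castSucc t.succ ≠ 0) {v : Fin (n + 1) → ℝ} {μ : ℝ}
    (hv : L *ᵥ v = μ • v) (hv0 : v ≠ 0) : v 0 ≠ 0 := by
  refine fun h0 => hv0 (funext fun i => ?_)
  suffices ∀ i j : Fin (n + 1), j ≤ i → v j = 0 from this i i le_rfl
  -- row `t` of `L *ᵥ v = μ • v` involves only `v (t - 1)`, `v t` and `v (t + 1)`
  refine Fin.induction (fun j hj => by rwa [nonpos_iff_eq_zero.1 hj]) fun t ih j hj => ?_
  rcases hj.lt_or_eq with hj | rfl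
  · exact ih j (Fin.le_castSucc_iff.2 hj)
  have hrow := congrFun hv t.castSucc
  rw [Pi.smul_apply, ih _ le_rfl, smul_zero, mulVec, dotProduct,
    Finset.sum_eq_single t.succ] at hrow
  · exact (mul_eq_zero.1 hrow).resolve_left (hsup t)
  · intro j _ hj
    rcases le_or_gt j t.castSucc with hjt | hjt
    · rw [ih j hjt, mul_zero]
    · rw [hL _ _ (Or.inl ?_), zero_mul]
      have : t.succ < j := lt_of_le_of_ne (Fin.castSucc_lt_iff_succ_le.1 hjt) (Ne.symm hj)
      simp only [Fin.lt_def, Fin.val_succ, Fin.val_castSucc] at this ⊢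
      omega
  · simp

end

theorem neg_one_pow_mul_det_submatrix_succ_pos {n : ℕ}
    {A : Matrix (Fin (n + 1)) (Fin (n + 1)) ℝ} (hT : Tridiagonal A) (hA : A.IsHermitian)
    (hsup : ∀ t : Fin n, A t.castSucc t.succ ≠ 0) {lam : Fin (n + 1) → ℝ}
    (hchar : A.charpoly = ∏ i, (X - C (lam i))) (hmono : StrictMono lam) (i : Fin (n + 1)) :
    0 < (-1 : ℝ) ^ (i : ℕ) *
      ((A - lam i • (1 : Matrix _ _ ℝ)).submatrix Fin.succ Fin.succ).det := by
  have hev : ∏ l, (X - C (lam l)) = ∏ l, (X - C (hA.eigenvalues l)) := by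
    simpa using hchar.symm.trans hA.charpoly_eq
  obtain ⟨k, hk⟩ := exists_eq_of_prod_X_sub_C_eq hev i
  set v : Fin (n + 1) → ℝ := ⇑(hA.eigenvectorBasis k)
  have hv : v ≠ 0 := fun h =>
    hA.eigenvectorBasis.orthonormal.ne_zero k (by ext l; exact congrFun h l)
  have hv0 : v 0 ≠ 0 :=
    hT.apply_zero_ne_zero_of_mulVec_eq_smul hsup (hA.mulVec_eigenvectorBasis k) hv
  have hminor : ((A - lam i • (1 : Matrix _ _ ℝ)).submatrix Fin.succ Fin.succ).det =
      (∏ l ∈ univ.erase i, (lam l - lam i)) * (v 0 * v 0) := by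
    rw [prod_erase_sub_eq_of_prod_X_sub_C_eq hev hk, hk,
      ← hA.adjugate_sub_eigenvalue_smul_apply, adjugate_fin_succ_eq_det_submatrix]
    simp
  rw [hminor, ← mul_assoc]
  exact mul_pos (hmono.neg_one_pow_mul_prod_erase_sub_pos i) (mul_self_pos.2 hv0)

end Tridiagonal

theorem stmt12 {n : ℕ} (L : Matrix (Fin (n + 2)) (Fin (n + 2)) ℝ)
    (hTri : Tridiagonal L)
    (hoff : ∀ i : Fin (n + 1), 0 < L i.castSucc i.succ ∧ 0 < L i.succ i.castSucc)
    (lam : Fin (n + 2) → ℝ)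
    (hchar : L.charpoly = ∏ i, (Polynomial.X - Polynomial.C (lam i)))
    (hmono : StrictMono lam) (hpos : 0 < lam 0) :
    TNN L ↔
      ∀ i : Fin (n + 2),
        0 < (-1 : ℝ) ^ (i : ℕ) *
          ((L - lam i • (1 : Matrix (Fin (n + 2)) (Fin (n + 2)) ℝ)).submatrix
            Fin.succ Fin.succ).det := by
  obtain ⟨d, hd, hsymm⟩ := hTri.exists_isSymm_diagonal_conj hoff
  have hd0 (i : Fin (n + 2)) : d i ≠ 0 := (hd i).ne'
  set J := diagonal d * L * diagonal d⁻¹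
  have hJ : J.IsHermitian := isHermitian_iff_isSymm.2 hsymm
  have hJchar : J.charpoly = ∏ i, (X - C (lam i)) := (charpoly_diagonal_conj hd0 L).trans hchar
  refine ⟨fun _ i => ?_, fun _ => hTri.tnn (fun t => ⟨(hoff t).1.le, (hoff t).2.le⟩) ?_⟩
  · rw [← det_submatrix_diagonal_conj hd0, diagonal_conj_sub_smul_one hd0]
    refine (hTri.diagonal_mul_mul_diagonal _ _).neg_one_pow_mul_det_submatrix_succ_pos hJ
      (fun t => ?_) hJchar hmono i
    simpa [J, mul_diagonal, diagonal_mul] using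
      (mul_pos (mul_pos (hd _) (hoff t).1) (inv_pos.2 (hd _))).ne'
  · have hJpos : J.PosDef := hJ.posDef_of_charpoly_eq_prod hJchar fun i =>
      hpos.trans_le (hmono.monotone (Fin.zero_le i))
    intro k f hf
    rw [← det_submatrix_diagonal_conj hd0]
    exact (hJpos.submatrix hf.injective).det_pos.le
end

section
/- Let L₀ be an N×N complex matrix such that for all t in an open interval containing 0, exp(tL₀) admits an LU-type decomposition exp(tL₀) = a(t)⁻¹ b(t) with b(t) upper triangular invertible and a(t) lower triangular unipotent. Then L(t) := a(t) L₀ a(t)⁻¹ satisfies the Toda lattice Lax equation dL/dt = [L, L₋], where L₋ denotes the strictly lower triangular part of L. -/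
/-- The strictly lower triangular part of a matrix. -/
def lowPart {N : ℕ} {R : Type*} [Zero R] (A : Matrix (Fin N) (Fin N) R) :
    Matrix (Fin N) (Fin N) R :=
  Matrix.of fun i j => if (j : ℕ) < i then A i j else 0

/-!
Both `g L₀` and `L₀ g` solve `y' = y L₀` with the same initial value, so `g` commutes with `L₀`.
Write `b = a g` and `L = a L₀ a⁻¹`. Then `b' b⁻¹ = a' a⁻¹ + a g L₀ g⁻¹ a⁻¹ = a' a⁻¹ + L`, where
the left side is upper triangular and `a' a⁻¹` is strictly lower triangular (`a` is lower
unipotent); hence `L₋ = -a' a⁻¹`. Since the derivative of a conjugation is a commutator,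
`L' = [a' a⁻¹, L] = [L, L₋]`.

The differentiability of `a` is not assumed; it comes from a Cramer-type formula: the part of
row `i` of `a` left of the diagonal is `-g_{i,<i} (g_{<i,<i})⁻¹`, and the leading principal block
`g_{<i,<i}` is invertible because `a g` is upper triangular and invertible.
-/

open Matrix Filter Topology Set

open scoped Matrix.Norms.Elementwise

namespace Matrix

variable {n R : Type*}

def IsLowerUnitriangular [LT n] [Zero R] [One R] (a : Matrix n n R) : Prop :=
  a.IsLowerTriangular ∧ ∀ i, a i i = 1

/-- `g = a⁻¹ b` with `a` lower unitriangular and `b` upper triangular and invertible. -/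
def IsLowerFactor [LT n] [Fintype n] [CommRing R] [DecidableEq n] (a g : Matrix n n R) : Prop :=
  a.IsLowerUnitriangular ∧ (a * g).IsUpperTriangular ∧ IsUnit (a * g).det

variable [LinearOrder n] [CommRing R] {a g : Matrix n n R}

theorem IsLowerUnitriangular.toBlock (ha : a.IsLowerUnitriangular) (p : n → Prop) :
    (a.toBlock p p).IsLowerUnitriangular :=
  ⟨ha.1.submatrix, fun i => ha.2 i⟩

theorem IsLowerUnitriangular.apply_of_le (ha : a.IsLowerUnitriangular)
    {i j : n} (hij : i ≤ j) : a i j = (1 : Matrix n n R) i j := by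
  rcases hij.lt_or_eq with hij | rfl
  · rw [ha.1 hij, one_apply_ne hij.ne]
  · rw [ha.2 i, one_apply_eq]

variable [Fintype n]

theorem IsLowerUnitriangular.det_eq_one (ha : a.IsLowerUnitriangular) : a.det = 1 := by
  rw [det_of_isLowerTriangular a ha.1]
  exact Finset.prod_eq_one fun i _ => ha.2 i

theorem IsLowerUnitriangular.isUnit_det (ha : a.IsLowerUnitriangular) : IsUnit a.det :=
  ha.det_eq_one ▸ isUnit_one

theorem IsLowerTriangular.toBlock_lt_mul (ha : a.IsLowerTriangular) (g : Matrix n n R) (k : n) :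
    (a * g).toBlock (· < k) (· < k) =
      a.toBlock (· < k) (· < k) * g.toBlock (· < k) (· < k) := by
  have hzero : a.toBlock (· < k) (fun j => ¬j < k) = 0 := by
    ext i j
    exact ha (show i.1 < j.1 from lt_of_lt_of_le i.2 (not_lt.1 j.2))
  rw [toBlock_mul_eq_add _ (· < k), hzero, Matrix.zero_mul, add_zero]

theorem IsLowerFactor.isUnit_det_toBlock_lt (h : IsLowerFactor a g) (k : n) :
    IsUnit (g.toBlock (· < k) (· < k)).det := by
  obtain ⟨ha, hb, hdet⟩ := h
  let _ := (a * g).invertibleOfIsUnitDet hdet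
  have hblock : IsUnit ((a * g).toBlock (· < k) (· < k)).det :=
    (isUnit_iff_isUnit_det _).1 (@isUnit_of_invertible _ _ _ (hb.invertibleToBlock k))
  have ha_block : (a.toBlock (· < k) (· < k)).det = 1 := (ha.toBlock (· < k)).det_eq_one
  rwa [ha.1.toBlock_lt_mul, det_mul, ha_block, one_mul] at hblock

theorem IsLowerUnitriangular.row_eq_neg_vecMul_inv_toBlock (ha : a.IsLowerUnitriangular)
    (hb : (a * g).IsUpperTriangular) (k : n) (hW : IsUnit (g.toBlock (· < k) (· < k)).det) :
    (fun q : {i // i < k} => a k q) =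
      -(fun q : {i // i < k} => g k q) ᵥ* (g.toBlock (· < k) (· < k))⁻¹ := by
  suffices hrow : (fun q : {i // i < k} => a k q) ᵥ* g.toBlock (· < k) (· < k) =
      -fun q : {i // i < k} => g k q by
    rw [← hrow, vecMul_vecMul, mul_nonsing_inv _ hW, vecMul_one]
  funext q
  have hzero : (a * g) k q = 0 := hb q.2
  have htail : ∑ m : {i // ¬i < k}, a k m * g m q = g k q := by
    rw [Fintype.sum_eq_single ⟨k, lt_irrefl k⟩ fun m hm => ?_]
    · simp [ha.2 k]
    · have hkm : k < m.1 := lt_of_le_of_ne (not_lt.1 m.2) fun h => hm (Subtype.ext h.symm)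
      rw [ha.1 hkm, zero_mul]
  rw [mul_apply, ← Fintype.sum_subtype_add_sum_subtype (· < k), htail] at hzero
  simpa [vecMul, dotProduct] using eq_neg_of_add_eq_zero_left hzero

theorem mul_apply_eq_zero_of_le {X Y : Matrix n n R} (hX : ∀ i j, i ≤ j → X i j = 0)
    (hY : Y.IsLowerTriangular) {i j : n} (hij : i ≤ j) : (X * Y) i j = 0 := by
  rw [mul_apply]
  refine Finset.sum_eq_zero fun k _ => ?_
  rcases le_or_gt i k with hik | hki
  · rw [hX i k hik, zero_mul]
  · rw [hY (hki.trans_le hij), mul_zero]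

end Matrix

theorem lowPart_eq_neg_of_isUpperTriangular_add {N : ℕ} {R : Type*} [AddGroup R]
    {L X : Matrix (Fin N) (Fin N) R} (hX : ∀ i j, i ≤ j → X i j = 0)
    (h : (L + X).IsUpperTriangular) : lowPart L = -X := by
  ext i j
  by_cases hij : j < i
  · rw [lowPart, of_apply, if_pos (Fin.lt_def.1 hij), neg_apply]
    exact eq_neg_of_add_eq_zero_left (h hij)
  · rw [lowPart, of_apply, if_neg (Fin.lt_def.not.1 hij), neg_apply, hX i j (not_lt.1 hij),
      neg_zero]

section Calculus

variable {𝕜 𝔸 m n p : Type*} [NontriviallyNormedField 𝕜] [NormedField 𝔸] [NormedAlgebra 𝕜 𝔸]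
  [Fintype n] {t : 𝕜}

theorem hasDerivAt_matrix_iff {A : 𝕜 → Matrix m n 𝔸} {A' : Matrix m n 𝔸} :
    HasDerivAt A A' t ↔ ∀ i j, HasDerivAt (fun u => A u i j) (A' i j) t :=
  hasDerivAt_pi.trans (forall_congr' fun _ => hasDerivAt_pi)

theorem differentiableAt_matrix_iff {A : 𝕜 → Matrix m n 𝔸} :
    DifferentiableAt 𝕜 A t ↔ ∀ i j, DifferentiableAt 𝕜 (fun u => A u i j) t :=
  differentiableAt_pi.trans (forall_congr' fun _ => differentiableAt_pi)

variable [Fintype p]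

theorem HasDerivAt.matrix_apply_eq_zero {A : 𝕜 → Matrix m n 𝔸} {A' : Matrix m n 𝔸}
    (hA : HasDerivAt A A' t) {i : m} {j : n} {c : 𝔸} (hc : ∀ᶠ u in 𝓝 t, A u i j = c) :
    A' i j = 0 :=
  ((hasDerivAt_matrix_iff.1 hA i j).congr_of_eventuallyEq (hc.mono fun _ hu => hu.symm)).unique
    (hasDerivAt_const t c)

theorem HasDerivAt.matrix_mul {A : 𝕜 → Matrix m n 𝔸} {B : 𝕜 → Matrix n p 𝔸}
    {A' : Matrix m n 𝔸} {B' : Matrix n p 𝔸} (hA : HasDerivAt A A' t) (hB : HasDerivAt B B' t) :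
    HasDerivAt (fun u => A u * B u) (A' * B t + A t * B') t := by
  rw [hasDerivAt_matrix_iff] at *
  intro i j
  simp only [mul_apply, Matrix.add_apply, ← Finset.sum_add_distrib]
  exact HasDerivAt.fun_sum fun k _ => (hA i k).fun_mul (hB k j)

variable [DecidableEq n] {A : 𝕜 → Matrix n n 𝔸}

theorem DifferentiableAt.matrix_det (hA : DifferentiableAt 𝕜 A t) :
    DifferentiableAt 𝕜 (fun u => (A u).det) t := by
  rw [differentiableAt_matrix_iff] at hA
  simp only [det_apply']
  exact DifferentiableAt.fun_sum fun σ _ =>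
    (DifferentiableAt.fun_finsetProd fun i _ => hA (σ i) i).const_mul _

theorem DifferentiableAt.matrix_adjugate (hA : DifferentiableAt 𝕜 A t) :
    DifferentiableAt 𝕜 (fun u => (A u).adjugate) t := by
  rw [differentiableAt_matrix_iff] at hA ⊢
  intro i j
  simp only [adjugate_apply]
  refine DifferentiableAt.matrix_det (differentiableAt_matrix_iff.2 fun k l => ?_)
  by_cases hk : k = j
  · simp [updateRow_apply, hk]
  · simpa [updateRow_apply, hk] using hA k l

theorem DifferentiableAt.matrix_inv (hA : DifferentiableAt 𝕜 A t) (hdet : IsUnit (A t).det) :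
    DifferentiableAt 𝕜 (fun u => (A u)⁻¹) t := by
  simp only [inv_def, Ring.inverse_eq_inv']
  exact (hA.matrix_det.inv hdet.ne_zero).smul hA.matrix_adjugate

theorem HasDerivAt.matrix_inv {A' : Matrix n n 𝔸} (hA : HasDerivAt A A' t)
    (hdet : IsUnit (A t).det) :
    HasDerivAt (fun u => (A u)⁻¹) (-((A t)⁻¹ * A' * (A t)⁻¹)) t := by
  obtain ⟨C', hC'⟩ : ∃ C', HasDerivAt (fun u => (A u)⁻¹) C' t :=
    ⟨_, (hA.differentiableAt.matrix_inv hdet).hasDerivAt⟩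
  have hone : (fun u => A u * (A u)⁻¹) =ᶠ[𝓝 t] fun _ => 1 :=
    (hA.differentiableAt.matrix_det.continuousAt.eventually_ne hdet.ne_zero).mono
      fun u hu => mul_nonsing_inv _ (isUnit_iff_ne_zero.2 hu)
  have hsum : A' * (A t)⁻¹ + A t * C' = 0 :=
    ((hA.matrix_mul hC').congr_of_eventuallyEq hone.symm).unique (hasDerivAt_const t 1)
  have hC'eq : (A t)⁻¹ * A' * (A t)⁻¹ + C' = 0 := by
    rw [Matrix.mul_assoc, ← nonsing_inv_mul_cancel_left (A t) C' hdet, ← Matrix.mul_add, hsum,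
      Matrix.mul_zero]
  rwa [← eq_neg_of_add_eq_zero_right hC'eq]

theorem HasDerivAt.matrix_conj {a : 𝕜 → Matrix n n 𝔸} {a' : Matrix n n 𝔸}
    (ha : HasDerivAt a a' t) (hdet : IsUnit (a t).det) (M : Matrix n n 𝔸) :
    HasDerivAt (fun u => a u * M * (a u)⁻¹)
      (a' * (a t)⁻¹ * (a t * M * (a t)⁻¹) - a t * M * (a t)⁻¹ * (a' * (a t)⁻¹)) t := by
  refine ((ha.matrix_mul (hasDerivAt_const t M)).matrix_mul (ha.matrix_inv hdet)).congr_deriv ?_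
  simp only [Matrix.mul_zero, add_zero, Matrix.mul_neg, Matrix.mul_assoc,
    nonsing_inv_mul_cancel_left _ _ hdet, sub_eq_add_neg]

end Calculus

theorem commute_of_hasDerivAt_mul {n 𝔸 : Type*} [Fintype n] [DecidableEq n] [NormedField 𝔸]
    [NormedAlgebra ℝ 𝔸] {g : ℝ → Matrix n n 𝔸} {M : Matrix n n 𝔸} (hg0 : g 0 = 1)
    (hg : ∀ t, HasDerivAt g (g t * M) t) (t : ℝ) : Commute (g t) M := by
  let φ u := g u * M - M * g u
  have hφ : ∀ u, HasDerivAt φ (φ u * M) u := fun u =>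
    (((hg u).matrix_mul (hasDerivAt_const u M)).sub
      ((hasDerivAt_const u M).matrix_mul (hg u))).congr_deriv (by
        simp only [φ, Matrix.sub_mul, Matrix.mul_assoc, Matrix.mul_zero, Matrix.zero_mul,
          add_zero, zero_add])
  let T : Matrix n n 𝔸 →L[ℝ] Matrix n n 𝔸 :=
    ⟨LinearMap.mulRight ℝ M, continuous_id.matrix_mul continuous_const⟩
  have hφ0 : φ = 0 := ODE_solution_unique_univ (v := fun _ => T) (s := fun _ => univ)
    (g := fun _ => 0) (t₀ := 0) (fun _ => T.lipschitz.lipschitzOnWith) (fun u => ⟨hφ u, trivial⟩)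
    (fun u => ⟨by simpa [T] using hasDerivAt_const u (0 : Matrix n n 𝔸), trivial⟩)
    (by simp [φ, hg0])
  exact sub_eq_zero.1 (congrFun hφ0 t)

section LowerFactor

variable {𝕜 𝔸 : Type*} [NontriviallyNormedField 𝕜] [NormedField 𝔸] [NormedAlgebra 𝕜 𝔸] {t : 𝕜}

theorem differentiableAt_lowerFactor {n : Type*} [Fintype n] [LinearOrder n]
    {a g : 𝕜 → Matrix n n 𝔸} (hg : DifferentiableAt 𝕜 g t)
    (hfact : ∀ᶠ u in 𝓝 t, IsLowerFactor (a u) (g u)) :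
    DifferentiableAt 𝕜 a t := by
  rw [differentiableAt_matrix_iff]
  intro i j
  rcases lt_or_ge j i with hji | hij
  · have hW : DifferentiableAt 𝕜 (fun u => ((g u).toBlock (· < i) (· < i))⁻¹) t := by
      refine DifferentiableAt.matrix_inv ?_ (hfact.self_of_nhds.isUnit_det_toBlock_lt i)
      exact differentiableAt_matrix_iff.2 fun p q => differentiableAt_matrix_iff.1 hg p q
    have hrow : DifferentiableAt 𝕜
        (fun u => ((-fun q : {k // k < i} => g u i q) ᵥ* ((g u).toBlock (· < i) (· < i))⁻¹)
          ⟨j, hji⟩) t := by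
      simp only [vecMul, dotProduct, Pi.neg_apply]
      exact DifferentiableAt.fun_sum fun q _ =>
        (differentiableAt_matrix_iff.1 hg i q).neg.mul (differentiableAt_matrix_iff.1 hW q _)
    refine hrow.congr_of_eventuallyEq (hfact.mono fun u hu => ?_)
    exact congrFun (hu.1.row_eq_neg_vecMul_inv_toBlock hu.2.1 i (hu.isUnit_det_toBlock_lt i))
      ⟨j, hji⟩
  · exact (differentiableAt_const _).congr_of_eventuallyEq
      (hfact.mono fun u hu => hu.1.apply_of_le hij)

theorem lowPart_conj_lowerFactor {N : ℕ} {a g : 𝕜 → Matrix (Fin N) (Fin N) 𝔸}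
    {a' L0 : Matrix (Fin N) (Fin N) 𝔸} (ha : HasDerivAt a a' t) (hg : HasDerivAt g (g t * L0) t)
    (hcomm : Commute (g t) L0) (hfact : ∀ᶠ u in 𝓝 t, IsLowerFactor (a u) (g u)) :
    lowPart (a t * L0 * (a t)⁻¹) = -(a' * (a t)⁻¹) := by
  obtain ⟨hat, hbt, hdet⟩ := hfact.self_of_nhds
  have hgdet : IsUnit (g t).det := isUnit_of_mul_isUnit_right (by rwa [← det_mul])
  let _ := (a t).invertibleOfIsUnitDet hat.isUnit_det
  let _ := (a t * g t).invertibleOfIsUnitDet hdet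
  have ha' : ∀ i j, i ≤ j → a' i j = 0 := fun i j hij =>
    ha.matrix_apply_eq_zero (hfact.mono fun u hu => hu.1.apply_of_le hij)
  have hb' : (a' * g t + a t * (g t * L0)).IsUpperTriangular := fun i j hji =>
    (ha.matrix_mul hg).matrix_apply_eq_zero (hfact.mono fun u hu => hu.2.1 hji)
  have hkey : a t * L0 * (a t)⁻¹ + a' * (a t)⁻¹ =
      (a' * g t + a t * (g t * L0)) * (a t * g t)⁻¹ := by
    rw [hcomm.eq, Matrix.mul_inv_rev, Matrix.add_mul]
    simp only [Matrix.mul_assoc, mul_nonsing_inv_cancel_left _ _ hgdet]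
    exact add_comm _ _
  refine lowPart_eq_neg_of_isUpperTriangular_add
    (fun i j => mul_apply_eq_zero_of_le ha' (blockTriangular_inv_of_blockTriangular hat.1)) ?_
  rw [hkey]
  exact hb'.mul (blockTriangular_inv_of_blockTriangular hbt)

theorem hasDerivAt_conj_lowerFactor {N : ℕ} {a g : 𝕜 → Matrix (Fin N) (Fin N) 𝔸}
    {L0 : Matrix (Fin N) (Fin N) 𝔸} (hg : HasDerivAt g (g t * L0) t) (hcomm : Commute (g t) L0)
    (hfact : ∀ᶠ u in 𝓝 t, IsLowerFactor (a u) (g u)) :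
    HasDerivAt (fun u => a u * L0 * (a u)⁻¹)
      (a t * L0 * (a t)⁻¹ * lowPart (a t * L0 * (a t)⁻¹) -
        lowPart (a t * L0 * (a t)⁻¹) * (a t * L0 * (a t)⁻¹)) t := by
  have ha := (differentiableAt_lowerFactor hg.differentiableAt hfact).hasDerivAt
  rw [lowPart_conj_lowerFactor ha hg hcomm hfact, Matrix.mul_neg, Matrix.neg_mul, sub_neg_eq_add,
    neg_add_eq_sub]
  exact ha.matrix_conj hfact.self_of_nhds.1.isUnit_det L0

end LowerFactor

theorem stmt18_general {N : ℕ} (L0 : Matrix (Fin N) (Fin N) ℂ)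
    (g a b : ℝ → Matrix (Fin N) (Fin N) ℂ)
    (s : Set ℝ) (hs : IsOpen s)
    (hg0 : g 0 = 1)
    (hgderiv : ∀ t : ℝ, ∀ i j : Fin N,
      HasDerivAt (fun u => g u i j) ((g t * L0) i j) t)
    (ha_low : ∀ t ∈ s, ∀ i j : Fin N, (i : ℕ) < j → a t i j = 0)
    (ha_diag : ∀ t ∈ s, ∀ i : Fin N, a t i i = 1)
    (hb_up : ∀ t ∈ s, ∀ i j : Fin N, (j : ℕ) < i → b t i j = 0)
    (hb_inv : ∀ t ∈ s, IsUnit (b t).det)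
    (hfact : ∀ t ∈ s, g t = (a t)⁻¹ * b t) :
    ∀ t ∈ s, ∀ i j : Fin N,
      HasDerivAt (fun u => (a u * L0 * (a u)⁻¹) i j)
        (((a t * L0 * (a t)⁻¹) * lowPart (a t * L0 * (a t)⁻¹) -
          lowPart (a t * L0 * (a t)⁻¹) * (a t * L0 * (a t)⁻¹)) i j) t := by
  have hg : ∀ t, HasDerivAt g (g t * L0) t := fun t => hasDerivAt_matrix_iff.2 (hgderiv t)
  have hLU : ∀ u ∈ s, IsLowerFactor (a u) (g u) := by
    intro u hu
    have ha : (a u).IsLowerUnitriangular := ⟨fun i j => ha_low u hu i j, ha_diag u hu⟩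
    have hb : a u * g u = b u := by
      rw [hfact u hu, mul_nonsing_inv_cancel_left _ _ ha.isUnit_det]
    rw [IsLowerFactor, hb]
    exact ⟨ha, fun i j => hb_up u hu i j, hb_inv u hu⟩
  intro t ht
  exact hasDerivAt_matrix_iff.1 <| hasDerivAt_conj_lowerFactor (hg t)
    (commute_of_hasDerivAt_mul hg0 hg t) (eventually_of_mem (hs.mem_nhds ht) hLU)

/-- Symes's theorem: if `g t = exp (t L₀)` (characterized by its ODE) admits a
factorization `g t = (a t)⁻¹ * b t` with `a t` lower unipotent and `b t` upper
triangular invertible on an open set containing 0, then `L t = a t * L₀ * (a t)⁻¹`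
solves the Toda Lax equation `dL/dt = [L, L₋]`. -/
theorem stmt18 {N : ℕ} (L0 : Matrix (Fin N) (Fin N) ℂ)
    (g a b : ℝ → Matrix (Fin N) (Fin N) ℂ)
    (s : Set ℝ) (hs : IsOpen s) (h0 : (0 : ℝ) ∈ s)
    (hg0 : g 0 = 1)
    (hgderiv : ∀ t : ℝ, ∀ i j : Fin N,
      HasDerivAt (fun u => g u i j) ((g t * L0) i j) t)
    (ha_low : ∀ t ∈ s, ∀ i j : Fin N, (i : ℕ) < j → a t i j = 0)
    (ha_diag : ∀ t ∈ s, ∀ i : Fin N, a t i i = 1)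
    (hb_up : ∀ t ∈ s, ∀ i j : Fin N, (j : ℕ) < i → b t i j = 0)
    (hb_inv : ∀ t ∈ s, IsUnit (b t).det)
    (hfact : ∀ t ∈ s, g t = (a t)⁻¹ * b t) :
    ∀ t ∈ s, ∀ i j : Fin N,
      HasDerivAt (fun u => (a u * L0 * (a u)⁻¹) i j)
        (((a t * L0 * (a t)⁻¹) * lowPart (a t * L0 * (a t)⁻¹) -
          lowPart (a t * L0 * (a t)⁻¹) * (a t * L0 * (a t)⁻¹)) i j) t :=
  stmt18_general L0 g a b s hs hg0 hgderiv ha_low ha_diag hb_up hb_inv hfact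
end
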